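/- Let μ(∞) > 0, λ(∞) > 0, and let ξ be an integrable real random variable with ξ ≤ 0 almost surely, P(ξ = 0) < 1, and E[ξ] + μ(∞)/λ(∞) < 0. Then the function φ(w) := E[e^{wξ}] − 1 + wμ(∞)/λ(∞) has a unique zero w > 0. -/

import Mathlib

/-!
Write `c = μ(∞)/λ(∞)` and `φ(w) = E[e^{wξ}] - 1 + c w`. Since `ξ ≤ 0`, `φ` is finite and convex on
`[0, ∞)`, `φ 0 = 0`, and by dominated convergence (`|e^{wξ} - 1| ≤ w |ξ|`) its right derivative at
`0` is `E[ξ] + c < 0`, while `φ w ≥ c w - 1` is eventually positive. Hence `φ` changes sign on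
`(0, ∞)` and has a root there; a convex function vanishing at `0 < u < v` as well as at `0` is
nonnegative on `(0, ∞)`, so a second root would contradict the negative values of `φ` near `0`.
-/

open MeasureTheory Set Filter Topology Real

lemma Real.abs_exp_sub_one_le_of_nonpos {x : ℝ} (hx : x ≤ 0) : |exp x - 1| ≤ |x| := by
  rw [abs_of_nonpos (by simpa using exp_le_one_iff.2 hx), abs_of_nonpos hx]
  linarith [add_one_le_exp x]

namespace ProbabilityTheory

variable {Ω : Type*} {m : MeasurableSpace Ω} {μ : Measure Ω} {X : Ω → ℝ}

lemma convexOn_mgf : ConvexOn ℝ (integrableExpSet X μ) (mgf X μ) := by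
  refine ⟨convex_integrableExpSet, fun s hs t ht a b ha hb hab => ?_⟩
  have hpt : ∀ ω, exp ((a • s + b • t) * X ω) ≤ a * exp (s * X ω) + b * exp (t * X ω) := by
    intro ω
    have := convexOn_exp.2 (mem_univ (s * X ω)) (mem_univ (t * X ω)) ha hb hab
    simp only [smul_eq_mul] at this ⊢
    rwa [add_mul, mul_assoc, mul_assoc]
  calc mgf X μ (a • s + b • t)
      ≤ ∫ ω, (a * exp (s * X ω) + b * exp (t * X ω)) ∂μ :=
        integral_mono (convex_integrableExpSet hs ht ha hb hab)
          ((hs.const_mul a).add (ht.const_mul b)) hpt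
    _ = a • mgf X μ s + b • mgf X μ t := by
        rw [integral_add (hs.const_mul a) (ht.const_mul b), integral_const_mul,
          integral_const_mul]
        rfl

lemma integrable_exp_mul_of_nonneg_of_nonpos [IsFiniteMeasure μ] (hX : AEMeasurable X μ)
    (hX0 : ∀ᵐ ω ∂μ, X ω ≤ 0) {t : ℝ} (ht : 0 ≤ t) :
    Integrable (fun ω => exp (t * X ω)) μ := by
  refine Integrable.mono' (integrable_const 1) (by fun_prop) ?_
  filter_upwards [hX0] with ω hω
  rw [norm_of_nonneg (exp_pos _).le]
  exact exp_le_one_iff.2 (mul_nonpos_of_nonneg_of_nonpos ht hω)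

lemma hasDerivWithinAt_mgf_zero_of_nonpos [IsFiniteMeasure μ] (hX : Integrable X μ)
    (hX0 : ∀ᵐ ω ∂μ, X ω ≤ 0) : HasDerivWithinAt (mgf X μ) μ[X] (Ioi 0) 0 := by
  rw [hasDerivWithinAt_iff_tendsto_slope' self_notMem_Ioi]
  have hslope : ∀ w, 0 ≤ w →
      slope (mgf X μ) 0 w = ∫ ω, slope (fun s => exp (s * X ω)) 0 w ∂μ := by
    intro w hw
    simp only [slope_def_field, mgf]
    rw [integral_div, integral_sub
      (integrable_exp_mul_of_nonneg_of_nonpos hX.1.aemeasurable hX0 hw)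
      (integrable_exp_mul_of_nonneg_of_nonpos hX.1.aemeasurable hX0 le_rfl)]
  refine Tendsto.congr'
    (eventually_nhdsWithin_of_forall fun w hw => (hslope w (le_of_lt hw)).symm) ?_
  refine tendsto_integral_filter_of_dominated_convergence (fun ω => |X ω|) ?_ ?_ hX.abs ?_
  · exact Eventually.of_forall fun w => by
      simp only [slope_def_field]
      have := hX.1.aemeasurable
      fun_prop
  · filter_upwards [self_mem_nhdsWithin] with w (hw : 0 < w)
    filter_upwards [hX0] with ω hω
    rw [slope_def_field, sub_zero, zero_mul, exp_zero, norm_div, Real.norm_eq_abs,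
      Real.norm_eq_abs, abs_of_pos hw, div_le_iff₀ hw]
    calc |exp (w * X ω) - 1| ≤ |w * X ω| :=
          abs_exp_sub_one_le_of_nonpos (mul_nonpos_of_nonneg_of_nonpos hw.le hω)
      _ = |X ω| * w := by rw [abs_mul, abs_of_pos hw, mul_comm]
  · refine Eventually.of_forall fun ω => ?_
    have hd : HasDerivAt (fun s => exp (s * X ω)) (X ω) 0 := by
      simpa using ((hasDerivAt_id (0 : ℝ)).mul_const (X ω)).exp
    exact (hasDerivWithinAt_iff_tendsto_slope' self_notMem_Ioi).1 hd.hasDerivWithinAt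

end ProbabilityTheory

lemma exists_pos_lt_zero_of_hasDerivWithinAt_Ioi {f : ℝ → ℝ} {f' : ℝ}
    (hf : HasDerivWithinAt f f' (Ioi 0) 0) (h0 : f 0 = 0) (hf' : f' < 0) :
    ∃ w, 0 < w ∧ f w < 0 := by
  have hslope := (hasDerivWithinAt_iff_tendsto_slope' self_notMem_Ioi).1 hf
  obtain ⟨w, hw, hw0⟩ :=
    ((hslope.eventually (gt_mem_nhds hf')).and self_mem_nhdsWithin).exists
  refine ⟨w, hw0, ?_⟩
  rw [slope_def_field, h0, sub_zero, sub_zero] at hw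
  exact neg_of_div_neg_left hw hw0.le

lemma ConvexOn.not_apply_eq_zero_of_lt {f : ℝ → ℝ} (hf : ConvexOn ℝ (Ici 0) f) (h0 : f 0 = 0)
    {w₀ u v : ℝ} (hw₀ : 0 < w₀) (hfw₀ : f w₀ < 0) (hu : 0 < u) (huv : u < v) (hfu : f u = 0) :
    f v ≠ 0 := by
  intro hfv
  rcases lt_trichotomy w₀ u with hw₀u | rfl | huw₀
  · have := hf.slope_mono_adjacent hw₀.le (hu.trans huv).le hw₀u huv
    rw [hfu, hfv, sub_self, zero_div, zero_sub, neg_div] at this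
    linarith [div_neg_of_neg_of_pos hfw₀ (sub_pos.2 hw₀u)]
  · exact hfw₀.ne hfu
  · have := hf.slope_mono_adjacent self_mem_Ici hw₀.le hu huw₀
    rw [hfu, h0, sub_self, zero_div, sub_zero] at this
    linarith [div_neg_of_neg_of_pos hfw₀ (sub_pos.2 huw₀)]

lemma ConvexOn.existsUnique_pos_apply_eq_zero {f : ℝ → ℝ} {f' M : ℝ}
    (hf : ConvexOn ℝ (Ici 0) f) (h0 : f 0 = 0) (hderiv : HasDerivWithinAt f f' (Ioi 0) 0)
    (hf' : f' < 0) (hM : 0 < M) (hfM : 0 < f M) :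
    ∃! w, 0 < w ∧ f w = 0 := by
  obtain ⟨w₀, hw₀, hfw₀⟩ := exists_pos_lt_zero_of_hasDerivWithinAt_Ioi hderiv h0 hf'
  have hcont : ContinuousOn f (uIcc w₀ M) := by
    refine (interior_Ici (a := (0 : ℝ)) ▸ hf.continuousOn_interior).mono fun x hx => ?_
    exact (lt_min hw₀ hM).trans_le hx.1
  obtain ⟨w, hw, hfw⟩ := intermediate_value_uIcc hcont (mem_uIcc_of_le hfw₀.le hfM.le)
  have hw0 : 0 < w := (lt_min hw₀ hM).trans_le hw.1
  refine ⟨w, ⟨hw0, hfw⟩, fun v ⟨hv, hfv⟩ => ?_⟩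
  rcases lt_trichotomy v w with hvw | rfl | hwv
  · exact absurd hfw (hf.not_apply_eq_zero_of_lt h0 hw₀ hfw₀ hv hvw hfv)
  · rfl
  · exact absurd hfv (hf.not_apply_eq_zero_of_lt h0 hw₀ hfw₀ hw0 hwv hfw)

open ProbabilityTheory in
theorem lundberg_root_exists_unique_general
    {Ω : Type*} [MeasureSpace Ω] (μ : Measure Ω) [IsProbabilityMeasure μ]
    (muInf lamInf : ℝ) (hmu : 0 < muInf) (hlam : 0 < lamInf)
    (ξ : Ω → ℝ) (hint : Integrable ξ μ) (hneg : ∀ᵐ ω ∂μ, ξ ω ≤ 0)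
    (hdrift : (∫ ω, ξ ω ∂μ) + muInf / lamInf < 0) :
    ∃! w : ℝ, 0 < w ∧
      (∫ ω, Real.exp (w * ξ ω) ∂μ) - 1 + w * muInf / lamInf = 0 := by
  set φ : ℝ → ℝ := fun w => mgf ξ μ w - 1 + w * muInf / lamInf
  have hc : 0 < muInf / lamInf := div_pos hmu hlam
  have hφ : φ = fun w => (mgf ξ μ w + -1) + muInf / lamInf * w := by
    funext w
    simp only [φ]
    ring
  have hconv : ConvexOn ℝ (Ici 0) φ := by
    have hmgf := convexOn_mgf.subset
      (fun _ ht => integrable_exp_mul_of_nonneg_of_nonpos hint.aemeasurable hneg ht) (convex_Ici 0)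
    rw [hφ]
    exact (hmgf.add_const (-1)).add ((convexOn_id (convex_Ici 0)).smul hc.le)
  have hderiv : HasDerivWithinAt φ (μ[ξ] + muInf / lamInf) (Ioi 0) 0 := by
    rw [hφ]
    exact ((hasDerivWithinAt_mgf_zero_of_nonpos hint hneg).add_const (-1)).add
      (hasDerivAt_const_mul (muInf / lamInf)).hasDerivWithinAt
  have hφM : 0 < φ (2 * lamInf / muInf) := by
    have : 2 * lamInf / muInf * muInf / lamInf = 2 := by field_simp
    simp only [φ, this]
    linarith [mgf_nonneg (X := ξ) (μ := μ) (t := 2 * lamInf / muInf)]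
  exact hconv.existsUnique_pos_apply_eq_zero (by simp [φ]) hderiv hdrift (by positivity) hφM

/-- If `μ∞ > 0`, `λ∞ > 0` and `ξ` is integrable, nonpositive a.s., not a.s. zero,
with `E[ξ] + μ∞/λ∞ < 0`, then `φ(w) = E[e^{wξ}] - 1 + wμ∞/λ∞` has a unique
positive zero. -/
theorem lundberg_root_exists_unique
    {Ω : Type*} [MeasureSpace Ω] (μ : Measure Ω) [IsProbabilityMeasure μ]
    (muInf lamInf : ℝ) (hmu : 0 < muInf) (hlam : 0 < lamInf)
    (ξ : Ω → ℝ) (hint : Integrable ξ μ) (hneg : ∀ᵐ ω ∂μ, ξ ω ≤ 0)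
    (hnz : μ {ω | ξ ω = 0} < 1)
    (hdrift : (∫ ω, ξ ω ∂μ) + muInf / lamInf < 0) :
    ∃! w : ℝ, 0 < w ∧
      (∫ ω, Real.exp (w * ξ ω) ∂μ) - 1 + w * muInf / lamInf = 0 :=
  lundberg_root_exists_unique_general μ muInf lamInf hmu hlam ξ hint hneg hdrift
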